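/- If n is an odd positive integer with KL(n) > 0, then h(n) ≥ 16/π². -/

import Mathlib

/-!
If `KL n > 0`, some summand is positive, so some divisor `d` of `n` has `φ(d)/d < 1/2`.
For every `d`, `φ(d)/d = ∏_{p ∣ d} (1 - 1/p)` and `∏_{p ∣ d} (1 + 1/p) = h(rad d) ≤ h(d)`, hence
`h(d) · φ(d)/d ≥ ∏_{p ∣ d} (1 - 1/p²)`. When `d` is odd, the Euler product for `ζ(2) = π²/6`
with the factor at `2` removed bounds this product below by `(3/4) · 6/π² = 8/π²`.
So `h(n) ≥ h(d) > 2 · 8/π²`.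
-/

/-- `KL n = ∑_{d ∣ n} d · log (d / (2 φ(d)))`. -/
noncomputable def KL (n : ℕ) : ℝ :=
  ∑ d ∈ n.divisors, (d : ℝ) * Real.log ((d : ℝ) / (2 * (Nat.totient d : ℝ)))

/-- `h n = σ(n) / n`. -/
noncomputable def h (n : ℕ) : ℝ := ((∑ d ∈ n.divisors, d : ℕ) : ℝ) / (n : ℝ)

open Real Finset Nat

lemma h_eq_abundancyIndex (n : ℕ) : h n = n.abundancyIndex := by
  simp [h, abundancyIndex]

lemma exists_two_mul_totient_lt_of_KL_pos {n : ℕ} (hKL : 0 < KL n) :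
    ∃ d ∈ n.divisors, 2 * φ d < d := by
  obtain ⟨d, hd, hpos⟩ := exists_lt_of_sum_lt (f := fun _ => (0 : ℝ)) (by simpa [KL] using hKL)
  refine ⟨d, hd, ?_⟩
  have hd0 : (0 : ℝ) < d := by exact_mod_cast pos_of_mem_divisors hd
  have hφ : (0 : ℝ) < 2 * φ d := by have := totient_pos.mpr (pos_of_mem_divisors hd); positivity
  have hlog : 0 < Real.log (d / (2 * φ d)) := pos_of_mul_pos_right hpos hd0.le
  rw [Real.log_pos_iff (by positivity), one_lt_div hφ] at hlog
  exact_mod_cast hlog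

lemma squarefree_prod_primeFactors (n : ℕ) : Squarefree (∏ p ∈ n.primeFactors, p) :=
  Finset.squarefree_prod_of_pairwise_isCoprime
    (fun _ hp _ hq hpq => Nat.coprime_iff_isRelPrime.mp <|
      (Nat.coprime_primes (prime_of_mem_primeFactors hp) (prime_of_mem_primeFactors hq)).mpr hpq)
    (fun _ hp => (prime_of_mem_primeFactors hp).squarefree)

lemma prod_one_add_inv_primeFactors (n : ℕ) :
    ∏ p ∈ n.primeFactors, (1 + (p : ℚ)⁻¹) = (∏ p ∈ n.primeFactors, p).abundancyIndex := by
  have hσ : ∏ p ∈ n.primeFactors, (1 + p) = ∑ e ∈ (∏ p ∈ n.primeFactors, p).divisors, e := by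
    simpa [primeFactors_prod_primeFactors] using
      ArithmeticFunction.isMultiplicative_id.prodPrimeFactors_one_add_of_squarefree
        (squarefree_prod_primeFactors n)
  rw [abundancyIndex, ← hσ]
  push_cast
  rw [← prod_div_distrib]
  refine prod_congr rfl fun p hp => ?_
  have : (p : ℚ) ≠ 0 := by exact_mod_cast (prime_of_mem_primeFactors hp).ne_zero
  field_simp
  ring

lemma prod_one_sub_inv_sq_primeFactors_mul_le {d : ℕ} (hd : d ≠ 0) :
    (∏ p ∈ d.primeFactors, (1 - ((p : ℚ) ^ 2)⁻¹)) * d ≤ d.abundancyIndex * φ d := by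
  have hsplit : ∏ p ∈ d.primeFactors, (1 - ((p : ℚ) ^ 2)⁻¹) =
      (∏ p ∈ d.primeFactors, (1 + (p : ℚ)⁻¹)) * ∏ p ∈ d.primeFactors, (1 - (p : ℚ)⁻¹) := by
    rw [← prod_mul_distrib]
    exact prod_congr rfl fun p _ => by ring
  rw [hsplit, prod_one_add_inv_primeFactors, mul_assoc, mul_comm _ (d : ℚ),
    ← totient_eq_mul_prod_factors]
  gcongr
  exact abundancyIndex_le_of_dvd hd (prod_primeFactors_dvd d)

lemma two_mul_prod_one_sub_inv_sq_primeFactors_le {d : ℕ} (hd : 2 * φ d < d) :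
    2 * ∏ p ∈ d.primeFactors, (1 - ((p : ℚ) ^ 2)⁻¹) ≤ d.abundancyIndex := by
  have hφ : (0 : ℚ) < φ d := by exact_mod_cast totient_pos.mpr (by omega)
  have hP : 0 ≤ ∏ p ∈ d.primeFactors, (1 - ((p : ℚ) ^ 2)⁻¹) := prod_nonneg fun p hp => by
    have : (1 : ℚ) ≤ (p : ℚ) ^ 2 := one_le_pow₀ (by exact_mod_cast (prime_of_mem_primeFactors hp).pos)
    simpa using inv_le_one_of_one_le₀ this
  refine le_of_mul_le_mul_right ?_ hφ
  calc 2 * (∏ p ∈ d.primeFactors, (1 - ((p : ℚ) ^ 2)⁻¹)) * φ d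
      = (∏ p ∈ d.primeFactors, (1 - ((p : ℚ) ^ 2)⁻¹)) * (2 * φ d : ℕ) := by push_cast; ring
    _ ≤ (∏ p ∈ d.primeFactors, (1 - ((p : ℚ) ^ 2)⁻¹)) * d := by gcongr
    _ ≤ d.abundancyIndex * φ d := prod_one_sub_inv_sq_primeFactors_mul_le (by omega)

noncomputable def invSq : ℕ →* ℝ where
  toFun n := ((n : ℝ) ^ 2)⁻¹
  map_one' := by simp
  map_mul' m n := by push_cast; rw [mul_pow, mul_inv]

@[simp]
lemma invSq_apply (n : ℕ) : invSq n = ((n : ℝ) ^ 2)⁻¹ := rfl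

lemma six_div_pi_sq_le_prod_one_sub_inv_sq {S : Finset ℕ} (hS : ∀ p ∈ S, p.Prime) :
    6 / π ^ 2 ≤ ∏ p ∈ S, (1 - ((p : ℝ) ^ 2)⁻¹) := by
  have hsum : Summable invSq := Real.summable_nat_pow_inv.mpr one_lt_two
  have heuler := EulerProduct.prod_filter_prime_geometric_eq_tsum_factoredNumbers hsum S
  rw [filter_true_of_mem hS] at heuler
  have hle : ∏ p ∈ S, (1 - ((p : ℝ) ^ 2)⁻¹)⁻¹ ≤ π ^ 2 / 6 :=
    calc ∏ p ∈ S, (1 - ((p : ℝ) ^ 2)⁻¹)⁻¹ = ∑' m : factoredNumbers S, invSq m := heuler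
      _ ≤ ∑' m, invSq m := hsum.tsum_subtype_le _ _ fun m => by rw [invSq_apply]; positivity
      _ = π ^ 2 / 6 := by simpa [one_div] using hasSum_zeta_two.tsum_eq
  have hpos : 0 < ∏ p ∈ S, (1 - ((p : ℝ) ^ 2)⁻¹) := prod_pos fun p hp => by
    have : (1 : ℝ) < p := by exact_mod_cast (hS p hp).one_lt
    have : ((p : ℝ) ^ 2)⁻¹ < 1 := inv_lt_one_of_one_lt₀ (by nlinarith)
    linarith
  rw [← inv_div]
  exact inv_le_of_inv_le₀ hpos (by rwa [← prod_inv_distrib])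

lemma eight_div_pi_sq_le_prod_one_sub_inv_sq {S : Finset ℕ} (hS : ∀ p ∈ S, p.Prime)
    (h2 : 2 ∉ S) : 8 / π ^ 2 ≤ ∏ p ∈ S, (1 - ((p : ℝ) ^ 2)⁻¹) := by
  have h := six_div_pi_sq_le_prod_one_sub_inv_sq (S := insert 2 S)
    (forall_mem_insert _ _ _ |>.mpr ⟨prime_two, hS⟩)
  rw [prod_insert h2] at h
  have hπ : 0 < π ^ 2 := by positivity
  rw [div_le_iff₀ hπ] at h ⊢
  norm_num at h
  linarith

theorem h_ge_of_KL_pos_odd_general (n : ℕ) (hodd : Odd n) (hKL : KL n > 0) :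
    h n ≥ 16 / Real.pi ^ 2 := by
  obtain ⟨d, hd, hφd⟩ := exists_two_mul_totient_lt_of_KL_pos hKL
  obtain ⟨hdn, hn⟩ := mem_divisors.mp hd
  have h2 : 2 ∉ d.primeFactors := fun h2 =>
    hodd.not_two_dvd_nat ((dvd_of_mem_primeFactors h2).trans hdn)
  have hP := eight_div_pi_sq_le_prod_one_sub_inv_sq (fun _ => prime_of_mem_primeFactors) h2
  have hPd := Rat.cast_le (K := ℝ) |>.mpr (two_mul_prod_one_sub_inv_sq_primeFactors_le hφd)
  push_cast at hPd
  calc 16 / π ^ 2 = 2 * (8 / π ^ 2) := by ring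
    _ ≤ (d.abundancyIndex : ℝ) := by linarith
    _ ≤ (n.abundancyIndex : ℝ) := by exact_mod_cast abundancyIndex_le_of_dvd hn hdn
    _ = h n := (h_eq_abundancyIndex n).symm

theorem h_ge_of_KL_pos_odd (n : ℕ) (hn : 0 < n) (hodd : Odd n) (hKL : KL n > 0) :
    h n ≥ 16 / Real.pi ^ 2 :=
  h_ge_of_KL_pos_odd_general n hodd hKL
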